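/- arXiv:2105.12081 — 4 statements merged into one kernel-verified Lean document; each statement's English description precedes it below -/
import Mathlib

section
/- Let c > 0, λ₀ ≥ 0, λ₂ ≥ 0, and β̂ ∈ ℝ^m. Then the function G(ξ) = (c/2)‖ξ − β̂‖₂² + λ₀·1(ξ ≠ 0) + λ₂‖ξ‖₂² is minimized over ξ ∈ ℝ^m by ξ* = (c/(c+2λ₂))·β̂ if (c/(c+2λ₂))‖β̂‖₂ ≥ √(2λ₀/(c+2λ₂)), and by ξ* = 0 otherwise. -/
/-!
Completing the square, the smooth part `c/2 ‖ξ - β̂‖² + λ₂ ‖ξ‖²` equals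
`(c + 2λ₂)/2 ‖ξ - v‖²` plus a constant, with `v = (c/(c + 2λ₂)) β̂`. So it suffices to minimise
`a/2 ‖ξ - v‖² + λ₀ 1(ξ ≠ 0)` with `a = c + 2λ₂ > 0`. Off the origin this is at least `λ₀`, attained
at `v`, while at the origin it is `a/2 ‖v‖²`; the threshold `‖v‖ ≥ √(2λ₀/a)` says exactly that
`λ₀ ≤ a/2 ‖v‖²`, i.e. which of the two candidates wins.
-/

theorem sqrt_two_mul_div_le_iff {a : ℝ} (ha : 0 < a) (lam0 : ℝ) {y : ℝ} (hy : 0 ≤ y) :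
    Real.sqrt (2 * lam0 / a) ≤ y ↔ lam0 ≤ a / 2 * y ^ 2 := by
  rw [Real.sqrt_le_left hy, div_le_iff₀ ha]
  constructor <;> intro h <;> linarith

section HardThreshold

variable {E : Type*} [SeminormedAddGroup E] [DecidableEq E]

noncomputable def l0Penalized (a lam0 : ℝ) (v x : E) : ℝ :=
  a / 2 * ‖x - v‖ ^ 2 + if x ≠ 0 then lam0 else 0

noncomputable def hardThreshold (a lam0 : ℝ) (v : E) : E :=
  if Real.sqrt (2 * lam0 / a) ≤ ‖v‖ then v else 0

theorem l0Penalized_zero (a lam0 : ℝ) (v : E) :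
    l0Penalized a lam0 v 0 = a / 2 * ‖v‖ ^ 2 := by
  simp [l0Penalized]

theorem min_le_l0Penalized {a : ℝ} (ha : 0 ≤ a) (lam0 : ℝ) (v x : E) :
    min lam0 (a / 2 * ‖v‖ ^ 2) ≤ l0Penalized a lam0 v x := by
  by_cases hx : x = 0
  · subst hx
    rw [l0Penalized_zero]
    exact min_le_right _ _
  · have hquad : 0 ≤ a / 2 * ‖x - v‖ ^ 2 := by positivity
    have hval : l0Penalized a lam0 v x = a / 2 * ‖x - v‖ ^ 2 + lam0 := by
      simp [l0Penalized, hx]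
    rw [hval]
    exact (min_le_left _ _).trans (le_add_of_nonneg_left hquad)

theorem l0Penalized_hardThreshold_le_min {a lam0 : ℝ} (ha : 0 < a) (hlam0 : 0 ≤ lam0) (v : E) :
    l0Penalized a lam0 v (hardThreshold a lam0 v) ≤ min lam0 (a / 2 * ‖v‖ ^ 2) := by
  unfold hardThreshold
  split_ifs with hcond
  · have hwin : lam0 ≤ a / 2 * ‖v‖ ^ 2 := (sqrt_two_mul_div_le_iff ha lam0 (norm_nonneg v)).1 hcond
    by_cases hv : v = 0
    · subst hv
      simp [l0Penalized, hlam0]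
    · simpa [l0Penalized, hv] using hwin
  · have hlose : a / 2 * ‖v‖ ^ 2 ≤ lam0 :=
      (not_le.1 ((sqrt_two_mul_div_le_iff ha lam0 (norm_nonneg v)).not.1 hcond)).le
    rw [l0Penalized_zero, min_eq_right hlose]

theorem l0Penalized_hardThreshold_le {a lam0 : ℝ} (ha : 0 < a) (hlam0 : 0 ≤ lam0) (v x : E) :
    l0Penalized a lam0 v (hardThreshold a lam0 v) ≤ l0Penalized a lam0 v x :=
  (l0Penalized_hardThreshold_le_min ha hlam0 v).trans (min_le_l0Penalized ha.le lam0 v x)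

end HardThreshold

theorem ridge_complete_square {E : Type*} [SeminormedAddCommGroup E] [InnerProductSpace ℝ E]
    {c lam2 : ℝ} (ha : c + 2 * lam2 ≠ 0) (b x : E) :
    c / 2 * ‖x - b‖ ^ 2 + lam2 * ‖x‖ ^ 2 =
      (c + 2 * lam2) / 2 * ‖x - (c / (c + 2 * lam2)) • b‖ ^ 2
        + c * lam2 / (c + 2 * lam2) * ‖b‖ ^ 2 := by
  rw [norm_sub_sq_real x b, norm_sub_sq_real, real_inner_smul_right, norm_smul,
    Real.norm_eq_abs, mul_pow, sq_abs]
  field_simp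
  ring

open Classical in

/-- The function G(ξ) = (c/2)‖ξ − β̂‖² + λ₀·1(ξ ≠ 0) + λ₂‖ξ‖² is minimized at
    ξ* = (c/(c+2λ₂))·β̂ if (c/(c+2λ₂))‖β̂‖ ≥ √(2λ₀/(c+2λ₂)), and at ξ* = 0 otherwise. -/
theorem l0_ridge_threshold_minimizer {m : ℕ} (c lam0 lam2 : ℝ)
    (hc : 0 < c) (hlam0 : 0 ≤ lam0) (hlam2 : 0 ≤ lam2)
    (b : EuclideanSpace ℝ (Fin m)) :
    let G : EuclideanSpace ℝ (Fin m) → ℝ := fun ξ =>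
      c / 2 * ‖ξ - b‖ ^ 2 + (if ξ ≠ 0 then lam0 else 0) + lam2 * ‖ξ‖ ^ 2
    let ξstar : EuclideanSpace ℝ (Fin m) :=
      if c / (c + 2 * lam2) * ‖b‖ ≥ Real.sqrt (2 * lam0 / (c + 2 * lam2)) then
        (c / (c + 2 * lam2)) • b else 0
    ∀ ξ : EuclideanSpace ℝ (Fin m), G ξstar ≤ G ξ := by
  intro G ξstar ξ
  set a := c + 2 * lam2
  set v := (c / a) • b
  have ha : 0 < a := by positivity
  have hG : ∀ x, G x = l0Penalized a lam0 v x + c * lam2 / a * ‖b‖ ^ 2 := fun x => by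
    have := ridge_complete_square ha.ne' b x
    simp only [G, l0Penalized, a, v]
    linear_combination this
  have hξstar : ξstar = hardThreshold a lam0 v := by
    rw [hardThreshold, norm_smul, Real.norm_of_nonneg (by positivity)]
  rw [hG, hG, hξstar]
  linarith [l0Penalized_hardThreshold_le ha hlam0 v ξ]
end

section
/- Let c > 0, λ₀ ≥ 0, λ₁ ≥ 0, λ₂ ≥ 0, and β̂ ∈ ℝ^m with β̂ ≠ 0. Define φ = (c/(c+2λ₂))·(1 − λ₁/(c‖β̂‖₂))₊. Then the function G(ξ) = (c/2)‖ξ − β̂‖₂² + λ₀·1(ξ ≠ 0) + λ₁‖ξ‖₂ + λ₂‖ξ‖₂² is minimized over ξ ∈ ℝ^m by ξ* = φ·β̂ if φ‖β̂‖₂ ≥ √(2λ₀/(c+2λ₂)) and ξ* = 0 otherwise, provided that either λ₀ = 0 or λ₁ = 0 or λ₂ = 0 as required to make the two thresholding rules consistent; in particular, when λ₁ = 0 the claimed minimizer holds for all λ₀, λ₂ ≥ 0. -/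
/-!
Write `G = F + λ₀·1(ξ ≠ 0)`. The smooth part `F` only sees `‖ξ‖` up to the reverse triangle
inequality `(‖ξ‖ - ‖β̂‖)² ≤ ‖ξ - β̂‖²`, with equality along the ray through `β̂`, so minimizing `F`
is minimizing the radial quadratic `((c + 2λ₂)/2) r² - (c‖β̂‖ - λ₁) r + (c/2)‖β̂‖²` over `r ≥ 0`.
Its minimizer is `t = φ‖β̂‖ = (c‖β̂‖ - λ₁)₊ / (c + 2λ₂)`, and `F 0 - F (φ β̂) = ((c + 2λ₂)/2) t²`.
Adding the penalty `λ₀·1(ξ ≠ 0)` then only asks whether the minimizer of `F` beats `0` by at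
least `λ₀`, which is the condition `t ≥ √(2λ₀/(c + 2λ₂))`.
-/

theorem ite_le_of_eq_add_ite_ne_zero {α : Type*} [Zero α] [DecidableEq α] {F G : α → ℝ}
    {l0 : ℝ} (hG : ∀ z, G z = F z + if z ≠ 0 then l0 else 0) (hl0 : 0 ≤ l0) {x : α}
    (hx : ∀ y, F x ≤ F y) (y : α) :
    G (if F x + l0 ≤ F 0 then x else 0) ≤ G y := by
  have hG_le : ∀ z, G z ≤ F z + l0 := fun z => by
    rw [hG]; split_ifs <;> linarith
  have hG_ne : ∀ z, z ≠ 0 → G z = F z + l0 := fun z hz => by simp [hG, hz]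
  have hG_zero : G 0 = F 0 := by simp [hG]
  by_cases hy : y = 0 <;> split_ifs with hbeat
  · simpa [hy, hG_zero] using (hG_le x).trans hbeat
  · rw [hy]
  · rw [hG_ne y hy]; linarith [hG_le x, hx y]
  · rw [hG_zero, hG_ne y hy]; linarith [hx y]

theorem half_mul_sq_sub_mul_le_of_kkt {a s t r : ℝ} (ha : 0 ≤ a) (hr : 0 ≤ r)
    (hst : s ≤ a * t) (hslack : (a * t - s) * t = 0) :
    a / 2 * t ^ 2 - s * t ≤ a / 2 * r ^ 2 - s * r := by
  nlinarith [mul_nonneg ha (sq_nonneg (r - t)), mul_nonneg (sub_nonneg.2 hst) hr]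

noncomputable def shrinkFactor (c l1 l2 B : ℝ) : ℝ :=
  c / (c + 2 * l2) * max (1 - l1 / (c * B)) 0

section ShrinkFactor

variable {c l1 l2 B : ℝ}

theorem shrinkFactor_nonneg (hc : 0 ≤ c) (hl2 : 0 ≤ l2) : 0 ≤ shrinkFactor c l1 l2 B :=
  mul_nonneg (div_nonneg hc (by linarith)) (le_max_right _ _)

theorem shrinkFactor_mul (hc : 0 < c) (hl2 : 0 ≤ l2) (hB : 0 < B) :
    shrinkFactor c l1 l2 B * B = max (c * B - l1) 0 / (c + 2 * l2) := by
  have hcB : 0 < c * B := mul_pos hc hB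
  rcases le_total (c * B - l1) 0 with h | h
  · have hneg : 1 - l1 / (c * B) ≤ 0 := by rw [sub_nonpos, le_div_iff₀ hcB]; linarith
    simp [shrinkFactor, max_eq_right hneg, max_eq_right h]
  · have hpos : 0 ≤ 1 - l1 / (c * B) := by rw [sub_nonneg, div_le_one hcB]; linarith
    rw [shrinkFactor, max_eq_left hpos, max_eq_left h]
    field_simp

/-- `t = φ B` is the KKT point of `r ↦ ((c + 2λ₂)/2) r² - (c B - λ₁) r` on `r ≥ 0`. -/
theorem shrinkFactor_kkt (hc : 0 < c) (hl2 : 0 ≤ l2) (hB : 0 < B) :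
    c * B - l1 ≤ (c + 2 * l2) * (shrinkFactor c l1 l2 B * B) ∧
      ((c + 2 * l2) * (shrinkFactor c l1 l2 B * B) - (c * B - l1))
        * (shrinkFactor c l1 l2 B * B) = 0 := by
  have ha : 0 < c + 2 * l2 := by linarith
  rw [shrinkFactor_mul hc hl2 hB, mul_div_cancel₀ _ ha.ne']
  rcases le_total (c * B - l1) 0 with h | h
  · simp [h]
  · simp [max_eq_left h]

end ShrinkFactor

section LassoRidge

variable {E : Type*} [NormedAddCommGroup E]

noncomputable def lassoRidgeObjective (c l1 l2 : ℝ) (b ξ : E) : ℝ :=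
  c / 2 * ‖ξ - b‖ ^ 2 + l1 * ‖ξ‖ + l2 * ‖ξ‖ ^ 2

variable {c l1 l2 : ℝ} {b : E}

theorem radial_le_lassoRidgeObjective (hc : 0 ≤ c) (ξ : E) :
    c / 2 * (‖ξ‖ - ‖b‖) ^ 2 + l1 * ‖ξ‖ + l2 * ‖ξ‖ ^ 2 ≤ lassoRidgeObjective c l1 l2 b ξ := by
  have hsq : (‖ξ‖ - ‖b‖) ^ 2 ≤ ‖ξ - b‖ ^ 2 := by
    rw [← sq_abs]
    exact pow_le_pow_left₀ (abs_nonneg _) (abs_norm_sub_norm_le ξ b) 2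
  unfold lassoRidgeObjective
  gcongr

variable [NormedSpace ℝ E]

theorem lassoRidgeObjective_smul {φ : ℝ} (hφ : 0 ≤ φ) :
    lassoRidgeObjective c l1 l2 b (φ • b)
      = c / 2 * (φ * ‖b‖ - ‖b‖) ^ 2 + l1 * (φ * ‖b‖) + l2 * (φ * ‖b‖) ^ 2 := by
  have hsub : ‖φ • b - b‖ ^ 2 = (φ * ‖b‖ - ‖b‖) ^ 2 := by
    rw [show φ • b - b = (φ - 1) • b by rw [sub_smul, one_smul], norm_smul, Real.norm_eq_abs,
      mul_pow, sq_abs]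
    ring
  rw [lassoRidgeObjective, hsub, norm_smul, Real.norm_of_nonneg hφ]

theorem lassoRidgeObjective_shrink_le (hc : 0 < c) (hl2 : 0 ≤ l2) (hb : b ≠ 0) (ξ : E) :
    lassoRidgeObjective c l1 l2 b (shrinkFactor c l1 l2 ‖b‖ • b)
      ≤ lassoRidgeObjective c l1 l2 b ξ := by
  obtain ⟨hst, hslack⟩ := shrinkFactor_kkt (l1 := l1) hc hl2 (norm_pos_iff.2 hb)
  have hradial := half_mul_sq_sub_mul_le_of_kkt (r := ‖ξ‖) (by linarith) (norm_nonneg ξ)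
    hst hslack
  rw [lassoRidgeObjective_smul (shrinkFactor_nonneg hc.le hl2)]
  linarith [radial_le_lassoRidgeObjective (l1 := l1) (l2 := l2) (b := b) hc.le ξ]

theorem lassoRidgeObjective_zero_eq (hc : 0 < c) (hl2 : 0 ≤ l2) (hb : b ≠ 0) :
    lassoRidgeObjective c l1 l2 b 0
      = lassoRidgeObjective c l1 l2 b (shrinkFactor c l1 l2 ‖b‖ • b)
        + (c + 2 * l2) / 2 * (shrinkFactor c l1 l2 ‖b‖ * ‖b‖) ^ 2 := by
  obtain ⟨-, hslack⟩ := shrinkFactor_kkt (l1 := l1) hc hl2 (norm_pos_iff.2 hb)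
  rw [lassoRidgeObjective_smul (shrinkFactor_nonneg hc.le hl2), lassoRidgeObjective]
  simp only [zero_sub, norm_neg, norm_zero]
  linear_combination -hslack

theorem sqrt_le_shrink_iff (hc : 0 < c) (hl2 : 0 ≤ l2) (hb : b ≠ 0) (l0 : ℝ) :
    √(2 * l0 / (c + 2 * l2)) ≤ shrinkFactor c l1 l2 ‖b‖ * ‖b‖ ↔
      lassoRidgeObjective c l1 l2 b (shrinkFactor c l1 l2 ‖b‖ • b) + l0
        ≤ lassoRidgeObjective c l1 l2 b 0 := by
  rw [Real.sqrt_le_left (mul_nonneg (shrinkFactor_nonneg hc.le hl2) (norm_nonneg b)),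
    div_le_iff₀ (by linarith), lassoRidgeObjective_zero_eq hc hl2 hb]
  constructor <;> intro h <;> linarith

end LassoRidge

open Classical in

theorem combined_threshold_minimizer_general {m : ℕ} (c lam0 lam1 lam2 : ℝ)
    (hc : 0 < c) (hlam0 : 0 ≤ lam0) (hlam2 : 0 ≤ lam2)
    (b : EuclideanSpace ℝ (Fin m)) (hb : b ≠ 0) :
    let φ : ℝ := c / (c + 2 * lam2) * max (1 - lam1 / (c * ‖b‖)) 0
    let G : EuclideanSpace ℝ (Fin m) → ℝ := fun ξ =>
      c / 2 * ‖ξ - b‖ ^ 2 + (if ξ ≠ 0 then lam0 else 0) + lam1 * ‖ξ‖ + lam2 * ‖ξ‖ ^ 2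
    let ξstar : EuclideanSpace ℝ (Fin m) :=
      if φ * ‖b‖ ≥ Real.sqrt (2 * lam0 / (c + 2 * lam2)) then φ • b else 0
    ∀ ξ : EuclideanSpace ℝ (Fin m), G ξstar ≤ G ξ := by
  intro φ G ξstar ξ
  change G (if √(2 * lam0 / (c + 2 * lam2)) ≤ shrinkFactor c lam1 lam2 ‖b‖ * ‖b‖
    then shrinkFactor c lam1 lam2 ‖b‖ • b else 0) ≤ G ξ
  have hG : ∀ ξ, G ξ = lassoRidgeObjective c lam1 lam2 b ξ + if ξ ≠ 0 then lam0 else 0 :=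
    fun ξ => by simp only [G, lassoRidgeObjective]; ring
  rw [if_congr (sqrt_le_shrink_iff hc hlam2 hb lam0) rfl rfl]
  exact ite_le_of_eq_add_ite_ne_zero hG hlam0 (lassoRidgeObjective_shrink_le hc hlam2 hb) ξ

open Classical in
/-- Combined thresholding operator for group subset selection with group lasso or
    ridge shrinkage (Proposition 2): with φ = (c/(c+2λ₂))·(1 − λ₁/(c‖β̂‖))₊, the function
    G(ξ) = (c/2)‖ξ − β̂‖² + λ₀·1(ξ ≠ 0) + λ₁‖ξ‖ + λ₂‖ξ‖² is minimized at ξ* = φ·β̂ if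
    φ‖β̂‖ ≥ √(2λ₀/(c+2λ₂)) and ξ* = 0 otherwise, provided λ₀ = 0 or λ₁ = 0 or λ₂ = 0. -/
theorem combined_threshold_minimizer {m : ℕ} (c lam0 lam1 lam2 : ℝ)
    (hc : 0 < c) (hlam0 : 0 ≤ lam0) (hlam1 : 0 ≤ lam1) (hlam2 : 0 ≤ lam2)
    (hcompat : lam0 = 0 ∨ lam1 = 0 ∨ lam2 = 0)
    (b : EuclideanSpace ℝ (Fin m)) (hb : b ≠ 0) :
    let φ : ℝ := c / (c + 2 * lam2) * max (1 - lam1 / (c * ‖b‖)) 0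
    let G : EuclideanSpace ℝ (Fin m) → ℝ := fun ξ =>
      c / 2 * ‖ξ - b‖ ^ 2 + (if ξ ≠ 0 then lam0 else 0) + lam1 * ‖ξ‖ + lam2 * ‖ξ‖ ^ 2
    let ξstar : EuclideanSpace ℝ (Fin m) :=
      if φ * ‖b‖ ≥ Real.sqrt (2 * lam0 / (c + 2 * lam2)) then φ • b else 0
    ∀ ξ : EuclideanSpace ℝ (Fin m), G ξstar ≤ G ξ :=
  combined_threshold_minimizer_general c lam0 lam1 lam2 hc hlam0 hlam2 b hb
end

section
/- Let F = L + Ω where Ω(β) = Σ_{k=1}^g [λ₀k·1(‖β_k‖₂ ≠ 0) + λ₁k‖β_k‖₂ + λ₂k‖β_k‖₂²] with λ₀k > 0, and let c̄_k > c_k for all k. Suppose a sequence of iterates {β^(m)} satisfies F(β^(m)) − F(β^(m+1)) ≥ Σ_k ((c̄_k − c_k)/2)‖β_k^(m+1) − β_k^(m)‖₂², and whenever block k changes between zero and nonzero at step m the updated nonzero block satisfies ‖β_k^(m+1)‖₂ ≥ √(2λ₀k/(c̄_k + 2λ₂k)) (or the removed block satisfied this bound). If F is bounded below, then the support {k : β_k^(m)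 ≠ 0} changes only finitely many times. -/
open Classical

open Filter Set

/-!
Each block entering or leaving the support moves by at least `√(2λ₀ₖ/(c̄ₖ + 2λ₂ₖ))`, so by the
sufficient-decrease inequality such a step lowers `F` by at least a fixed `δₖ > 0`. But `F` is
nonincreasing along the iterates and bounded below, hence convergent, so its one-step decreases
tend to `0` and eventually drop below every `δₖ`: from then on no block changes.
-/

theorem Antitone.eventually_sub_succ_lt {u : ℕ → ℝ} (hu : Antitone u)
    (hbdd : BddBelow (range u)) {δ : ℝ} (hδ : 0 < δ) : ∀ᶠ m in atTop, u m - u (m + 1) < δ := by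
  have hlim := tendsto_atTop_ciInf hu hbdd
  have hsub : Tendsto (fun m => u m - u (m + 1)) atTop (nhds 0) := by
    simpa using hlim.sub (hlim.comp (tendsto_add_atTop_nat 1))
  exact (tendsto_order.1 hsub).2 δ hδ

theorem le_norm_sub_sq_of_eq_zero_iff_ne_zero {V : Type*} [NormedAddCommGroup V] {x y : V}
    {r : ℝ} (hin : x = 0 → y ≠ 0 → √r ≤ ‖y‖) (hout : x ≠ 0 → y = 0 → √r ≤ ‖x‖)
    (hchange : x = 0 ↔ y ≠ 0) : r ≤ ‖y - x‖ ^ 2 := by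
  refine (Real.sqrt_le_iff.1 ?_).2
  by_cases hx : x = 0
  · simpa [hx] using hin hx (by tauto)
  · have hy : y = 0 := by tauto
    simpa [hy] using hout hx hy

theorem exists_forall_ge_iff_of_eventually_iff_succ {ι : Type*} [Finite ι] {p : ℕ → ι → Prop}
    (h : ∀ k, ∀ᶠ m in atTop, (p (m + 1) k ↔ p m k)) : ∃ M, ∀ m ≥ M, ∀ k, (p m k ↔ p M k) := by
  have hconst : EventuallyConst p atTop :=
    eventuallyConst_atTop_nat.2 <| (eventually_atTop.1 (eventually_all.2 h)).imp
      fun _ hN m hm => funext fun k => propext (hN m hm k)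
  obtain ⟨M, hM⟩ := eventuallyConst_atTop.1 hconst
  exact ⟨M, fun m hm k => iff_of_eq (congrFun (hM m hm) k)⟩

theorem support_stabilizes_general {g : ℕ} {V : Type*}
    [NormedAddCommGroup V]
    (lam0 lam2 c cb : Fin g → ℝ)
    (hlam0 : ∀ k, 0 < lam0 k) (hlam2 : ∀ k, 0 ≤ lam2 k)
    (hc : ∀ k, 0 ≤ c k) (hcb : ∀ k, c k < cb k)
    (F : (Fin g → V) → ℝ)
    (β : ℕ → Fin g → V)
    (hdecr : ∀ m, F (β m) - F (β (m + 1)) ≥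
      ∑ k, (cb k - c k) / 2 * ‖β (m + 1) k - β m k‖ ^ 2)
    (hthresh_in : ∀ m k, β m k = 0 → β (m + 1) k ≠ 0 →
      ‖β (m + 1) k‖ ≥ Real.sqrt (2 * lam0 k / (cb k + 2 * lam2 k)))
    (hthresh_out : ∀ m k, β m k ≠ 0 → β (m + 1) k = 0 →
      ‖β m k‖ ≥ Real.sqrt (2 * lam0 k / (cb k + 2 * lam2 k)))
    (hbdd : ∃ B : ℝ, ∀ x, B ≤ F x) :
    ∃ M : ℕ, ∀ m ≥ M, ∀ k, (β m k ≠ 0 ↔ β M k ≠ 0) := by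
  have hterm : ∀ m k, 0 ≤ (cb k - c k) / 2 * ‖β (m + 1) k - β m k‖ ^ 2 := fun m k =>
    mul_nonneg (by linarith [hcb k]) (sq_nonneg _)
  have hanti : Antitone fun m => F (β m) := antitone_nat_of_succ_le fun m => by
    linarith [hdecr m, Finset.sum_nonneg fun k (_ : k ∈ Finset.univ) => hterm m k]
  obtain ⟨B, hB⟩ := hbdd
  have hstable : ∀ k, ∀ᶠ m in atTop, (β (m + 1) k ≠ 0 ↔ β m k ≠ 0) := fun k => by
    have hgap : 0 < cb k - c k := by linarith [hcb k]
    have hden : 0 < cb k + 2 * lam2 k := by linarith [hc k, hlam2 k]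
    have hδ : 0 < (cb k - c k) / 2 * (2 * lam0 k / (cb k + 2 * lam2 k)) :=
      mul_pos (half_pos hgap) (div_pos (by linarith [hlam0 k]) hden)
    filter_upwards [hanti.eventually_sub_succ_lt ⟨B, forall_mem_range.2 fun m => hB _⟩ hδ]
      with m hm
    by_contra hchange
    have hjump := le_norm_sub_sq_of_eq_zero_iff_ne_zero (hthresh_in m k) (hthresh_out m k)
      (by tauto)
    have hscaled := mul_le_mul_of_nonneg_left hjump (half_pos hgap).le
    have hsingle := Finset.single_le_sum (fun j _ => hterm m j) (Finset.mem_univ k)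
    linarith [hdecr m]
  exact exists_forall_ge_iff_of_eventually_iff_succ hstable

/-- Support stabilization (Lemma 4): under the per-update decrease inequality and the
    thresholding lower bound on any block entering or leaving the support, if F = L + Ω is
    bounded below then the support {k : β_k^(m) ≠ 0} changes only finitely many times. -/
theorem support_stabilizes {g : ℕ} {V : Type*}
    [NormedAddCommGroup V] [InnerProductSpace ℝ V]
    (L : (Fin g → V) → ℝ)
    (lam0 lam1 lam2 c cb : Fin g → ℝ)
    (hlam0 : ∀ k, 0 < lam0 k) (hlam1 : ∀ k, 0 ≤ lam1 k) (hlam2 : ∀ k, 0 ≤ lam2 k)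
    (hc : ∀ k, 0 ≤ c k) (hcb : ∀ k, c k < cb k)
    (F : (Fin g → V) → ℝ)
    (hF : F = fun β => L β + ∑ k, ((if β k ≠ 0 then lam0 k else 0)
      + lam1 k * ‖β k‖ + lam2 k * ‖β k‖ ^ 2))
    (β : ℕ → Fin g → V)
    (hdecr : ∀ m, F (β m) - F (β (m + 1)) ≥
      ∑ k, (cb k - c k) / 2 * ‖β (m + 1) k - β m k‖ ^ 2)
    (hthresh_in : ∀ m k, β m k = 0 → β (m + 1) k ≠ 0 →
      ‖β (m + 1) k‖ ≥ Real.sqrt (2 * lam0 k / (cb k + 2 * lam2 k)))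
    (hthresh_out : ∀ m k, β m k ≠ 0 → β (m + 1) k = 0 →
      ‖β m k‖ ≥ Real.sqrt (2 * lam0 k / (cb k + 2 * lam2 k)))
    (hbdd : ∃ B : ℝ, ∀ x, B ≤ F x) :
    ∃ M : ℕ, ∀ m ≥ M, ∀ k, (β m k ≠ 0 ↔ β M k ≠ 0) :=
  support_stabilizes_general lam0 lam2 c cb hlam0 hlam2 hc hcb F β hdecr hthresh_in hthresh_out hbdd
end

section
/- Let f⁰ ∈ ℝ^n, y = f⁰ + ε, and suppose (β̂, {ν̂^(k)}) minimizes (1/n)‖y − Xβ‖₂² + 2Σ_k λ_k‖ν^(k)‖₂ over decompositions β = Σ_k ν^(k) with each ν^(k) supported on group G_k and at most s groups nonzero. If for all k, (1/n)‖X_k^⊤ε‖₂ ≤ λ_k, then for any feasible (β, {ν^(k)}): (1/n)‖f⁰ − Xβ̂‖₂² ≤ (1/n)‖f⁰ − Xβ‖₂² + 4Σ_k λ_k‖ν^(k)‖₂. -/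
/-!
Comparing the objective at `β̂` and at `β`, and expanding `y = f⁰ + ε`, leaves the cross term
`(2/n)⟪Xᵀε, β̂ - β⟫`. Writing `β̂ - β = ∑ₖ (ν̂⁽ᵏ⁾ - ν⁽ᵏ⁾)` with each summand supported on `G k`,
Cauchy–Schwarz on `G k` and the noise bound give at most `2 ∑ₖ λₖ (‖ν̂⁽ᵏ⁾‖ + ‖ν⁽ᵏ⁾‖)`; the
`ν̂` part cancels against the penalty difference, leaving `4 ∑ₖ λₖ ‖ν⁽ᵏ⁾‖`.
-/

open Matrix Classical

open Finset

section GroupNorms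

variable {ι κ : Type*} [Fintype ι]

lemma sqrt_sum_sq_eq_norm_toLp (v : ι → ℝ) :
    √(∑ j, v j ^ 2) = ‖WithLp.toLp 2 v‖ := by
  simp [EuclideanSpace.norm_eq]

lemma sqrt_sum_sq_sub_le (u v : ι → ℝ) :
    √(∑ j, (u j - v j) ^ 2) ≤ √(∑ j, u j ^ 2) + √(∑ j, v j ^ 2) := by
  calc √(∑ j, (u j - v j) ^ 2) = ‖WithLp.toLp 2 u - WithLp.toLp 2 v‖ :=
        sqrt_sum_sq_eq_norm_toLp (u - v)
    _ ≤ _ := norm_sub_le _ _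
    _ = _ := by rw [sqrt_sum_sq_eq_norm_toLp, sqrt_sum_sq_eq_norm_toLp]

lemma dotProduct_le_of_support_subset {S : Finset ι} {A d : ι → ℝ}
    (hd : ∀ j ∉ S, d j = 0) {c lam : ℝ} (hc : 0 ≤ c)
    (hA : c * √(∑ j ∈ S, A j ^ 2) ≤ lam) :
    c * (A ⬝ᵥ d) ≤ lam * √(∑ j, d j ^ 2) := by
  have hS : ∀ h : ι → ℝ, ∑ j ∈ S, h j * d j = ∑ j, h j * d j := fun h =>
    sum_subset (subset_univ S) fun j _ hj => by rw [hd j hj, mul_zero]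
  calc c * (A ⬝ᵥ d) = c * ∑ j ∈ S, A j * d j := by rw [hS, dotProduct]
    _ ≤ c * (√(∑ j ∈ S, A j ^ 2) * √(∑ j ∈ S, d j ^ 2)) :=
      mul_le_mul_of_nonneg_left (Real.sum_mul_le_sqrt_mul_sqrt S A d) hc
    _ = c * √(∑ j ∈ S, A j ^ 2) * √(∑ j, d j ^ 2) := by
      simp only [sq, hS d, mul_assoc]
    _ ≤ lam * √(∑ j, d j ^ 2) := mul_le_mul_of_nonneg_right hA (Real.sqrt_nonneg _)

lemma dotProduct_sum_le [Fintype κ] {G : κ → Finset ι} {d : κ → ι → ℝ}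
    (hd : ∀ k, ∀ j ∉ G k, d k j = 0) {A : ι → ℝ} {c : ℝ} {lam : κ → ℝ} (hc : 0 ≤ c)
    (hA : ∀ k, c * √(∑ j ∈ G k, A j ^ 2) ≤ lam k) :
    c * (A ⬝ᵥ ∑ k, d k) ≤ ∑ k, lam k * √(∑ j, d k j ^ 2) := by
  rw [dotProduct_sum, mul_sum]
  exact sum_le_sum fun k _ => dotProduct_le_of_support_subset (hd k) hc (hA k)

lemma dotProduct_sub_le_of_decompositions [Fintype κ] {G : κ → Finset ι} {β β' : ι → ℝ}
    {ν ν' : κ → ι → ℝ} (hβ : ∀ j, β j = ∑ k, ν k j) (hβ' : ∀ j, β' j = ∑ k, ν' k j)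
    (hν : ∀ k, ∀ j ∉ G k, ν k j = 0) (hν' : ∀ k, ∀ j ∉ G k, ν' k j = 0)
    {A : ι → ℝ} {c : ℝ} {lam : κ → ℝ} (hc : 0 ≤ c)
    (hA : ∀ k, c * √(∑ j ∈ G k, A j ^ 2) ≤ lam k) :
    c * (A ⬝ᵥ β - A ⬝ᵥ β') ≤
      ∑ k, lam k * (√(∑ j, ν k j ^ 2) + √(∑ j, ν' k j ^ 2)) := by
  have hdiff : β - β' = ∑ k, (ν k - ν' k) := by
    ext j
    simp only [Pi.sub_apply, hβ, hβ', Finset.sum_apply, sum_sub_distrib]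
  have hlam : ∀ k, 0 ≤ lam k := fun k => (mul_nonneg hc (Real.sqrt_nonneg _)).trans (hA k)
  calc c * (A ⬝ᵥ β - A ⬝ᵥ β') = c * (A ⬝ᵥ ∑ k, (ν k - ν' k)) := by
        rw [← dotProduct_sub, hdiff]
    _ ≤ ∑ k, lam k * √(∑ j, (ν k j - ν' k j) ^ 2) :=
      dotProduct_sum_le (fun k j hj => by simp [hν k j hj, hν' k j hj]) hc hA
    _ ≤ _ := sum_le_sum fun k _ =>
      mul_le_mul_of_nonneg_left (sqrt_sum_sq_sub_le _ _) (hlam k)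

end GroupNorms

lemma sum_sq_add_sub_mulVec {m ι : Type*} [Fintype m] [Fintype ι] (X : Matrix m ι ℝ)
    (f e : m → ℝ) (b : ι → ℝ) :
    ∑ i, ((f + e) i - (X *ᵥ b) i) ^ 2 =
      ∑ i, (f i - (X *ᵥ b) i) ^ 2 + 2 * (e ⬝ᵥ f) - 2 * ((e ᵥ* X) ⬝ᵥ b) + e ⬝ᵥ e := by
  rw [← dotProduct_mulVec]
  simp only [dotProduct, Pi.add_apply, mul_sum, ← sum_add_distrib, ← sum_sub_distrib]
  exact sum_congr rfl fun i _ => by ring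

theorem slow_rate_oracle_core_general {n p g : ℕ}
    (X : Matrix (Fin n) (Fin p) ℝ) (f0 ε y : Fin n → ℝ) (hy : y = f0 + ε)
    (G : Fin g → Finset (Fin p)) (lam : Fin g → ℝ)
    (s : ℕ)
    (Feasible : (Fin p → ℝ) → (Fin g → Fin p → ℝ) → Prop)
    (hFeasible : Feasible = fun β ν =>
      (∀ j, β j = ∑ k, ν k j) ∧ (∀ k, ∀ j ∉ G k, ν k j = 0) ∧
      (Finset.univ.filter fun k => ν k ≠ 0).card ≤ s)
    (J : (Fin p → ℝ) → (Fin g → Fin p → ℝ) → ℝ)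
    (hJ : J = fun β ν => (1 / n : ℝ) * ∑ i, (y i - (X.mulVec β) i) ^ 2
      + 2 * ∑ k, lam k * Real.sqrt (∑ j, ν k j ^ 2))
    (hnoise : ∀ k, (1 / n : ℝ) * Real.sqrt (∑ j ∈ G k, (∑ i, ε i * X i j) ^ 2) ≤ lam k)
    (βhat : Fin p → ℝ) (νhat : Fin g → Fin p → ℝ)
    (hfeas_hat : Feasible βhat νhat)
    (hopt : ∀ β ν, Feasible β ν → J βhat νhat ≤ J β ν) :
    ∀ β ν, Feasible β ν →
      (1 / n : ℝ) * ∑ i, (f0 i - (X.mulVec βhat) i) ^ 2 ≤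
        (1 / n : ℝ) * ∑ i, (f0 i - (X.mulVec β) i) ^ 2
          + 4 * ∑ k, lam k * Real.sqrt (∑ j, ν k j ^ 2) := by
  intro β ν hfeas
  subst hFeasible hJ hy
  have hbasic := hopt β ν hfeas
  obtain ⟨hβ, hν, -⟩ := hfeas
  obtain ⟨hβhat, hνhat, -⟩ := hfeas_hat
  have hcross := dotProduct_sub_le_of_decompositions (A := ε ᵥ* X) hβhat hβ hνhat hν
    (by positivity) hnoise
  simp only [sum_sq_add_sub_mulVec] at hbasic
  simp only [mul_add, sum_add_distrib] at hcross
  linear_combination hbasic + 2 * hcross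

/-- Deterministic core of the slow-rate oracle inequality (Theorem 4): if (β̂, ν̂) minimizes
    (1/n)‖y − Xβ‖² + 2Σ_k λ_k‖ν^(k)‖₂ over group-sparse latent decompositions, and the
    group-wise empirical process terms satisfy (1/n)‖X_k^⊤ε‖₂ ≤ λ_k, then for any feasible
    (β, ν): (1/n)‖f⁰ − Xβ̂‖² ≤ (1/n)‖f⁰ − Xβ‖² + 4Σ_k λ_k‖ν^(k)‖₂. -/
theorem slow_rate_oracle_core {n p g : ℕ} (hn : 0 < n)
    (X : Matrix (Fin n) (Fin p) ℝ) (f0 ε y : Fin n → ℝ) (hy : y = f0 + ε)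
    (G : Fin g → Finset (Fin p)) (lam : Fin g → ℝ) (hlam : ∀ k, 0 ≤ lam k)
    (s : ℕ)
    (Feasible : (Fin p → ℝ) → (Fin g → Fin p → ℝ) → Prop)
    (hFeasible : Feasible = fun β ν =>
      (∀ j, β j = ∑ k, ν k j) ∧ (∀ k, ∀ j ∉ G k, ν k j = 0) ∧
      (Finset.univ.filter fun k => ν k ≠ 0).card ≤ s)
    (J : (Fin p → ℝ) → (Fin g → Fin p → ℝ) → ℝ)
    (hJ : J = fun β ν => (1 / n : ℝ) * ∑ i, (y i - (X.mulVec β) i) ^ 2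
      + 2 * ∑ k, lam k * Real.sqrt (∑ j, ν k j ^ 2))
    (hnoise : ∀ k, (1 / n : ℝ) * Real.sqrt (∑ j ∈ G k, (∑ i, ε i * X i j) ^ 2) ≤ lam k)
    (βhat : Fin p → ℝ) (νhat : Fin g → Fin p → ℝ)
    (hfeas_hat : Feasible βhat νhat)
    (hopt : ∀ β ν, Feasible β ν → J βhat νhat ≤ J β ν) :
    ∀ β ν, Feasible β ν →
      (1 / n : ℝ) * ∑ i, (f0 i - (X.mulVec βhat) i) ^ 2 ≤
        (1 / n : ℝ) * ∑ i, (f0 i - (X.mulVec β) i) ^ 2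
          + 4 * ∑ k, lam k * Real.sqrt (∑ j, ν k j ^ 2) :=
  slow_rate_oracle_core_general X f0 ε y hy G lam s Feasible hFeasible J hJ hnoise βhat νhat
    hfeas_hat hopt
end
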